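/- In an EI category C of type ℕ, every nonempty sieve S on an object m (i.e., nonempty subfunctor of C(m,−)) is principal: there exists a morphism f: m → n in S with S = {g∘f : g ∈ C(n,−)}. Consequently the nonempty sieves on m are exactly the sieves S(m,r) = {f with domain m : deg f ≥ r}, r ∈ ℕ, and they form a strictly decreasing chain. -/
import Mathlib


open CategoryTheory

/-- In an EI category of type ℕ — here presented, in the convention where the Lean
category structure on ℕ is the opposite of the paper's category, so that a Lean morphism
`n ⟶ m` is a paper morphism `m → n` (which exists iff `m ≤ n` and has degree `n - m`) —
`degSieve hne m r` is the sieve `S(m,r)` on `m` of all morphisms out of `m` (in the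
paper) of degree at least `r`. -/
def degSieve [SmallCategory ℕ]
    (hne : ∀ m n : ℕ, Nonempty ((n : ℕ) ⟶ (m : ℕ)) ↔ m ≤ n) (m r : ℕ) :
    Sieve (m : ℕ) where
  arrows k _ := m + r ≤ k
  downward_closed := fun {k j} {f} hf g => le_trans hf ((hne k j).mp ⟨g⟩)

/-- In an EI category of type ℕ, every nonempty sieve `S` on an object `m` is principal,
generated by a single morphism `f` of `S` (so that `S` consists exactly of the composites
`g ∘ f`); consequently the nonempty sieves on `m` are exactly the sieves
`S(m,r) = degSieve hne m r`, `r ∈ ℕ`, and these form a strictly decreasing chain. -/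
theorem sieves_in_type_N_are_principal [SmallCategory ℕ]
    (hne : ∀ m n : ℕ, Nonempty ((n : ℕ) ⟶ (m : ℕ)) ↔ m ≤ n)
    (htrans : ∀ (m n : ℕ) (f g : (n : ℕ) ⟶ (m : ℕ)), ∃ e : (n : ℕ) ⟶ (n : ℕ), e ≫ f = g)
    (hgen : ∀ (m n : ℕ) (f : (n : ℕ) ⟶ (m : ℕ)), m < n →
      ∃ (g : (n : ℕ) ⟶ ((m + 1 : ℕ) : ℕ)) (h : ((m + 1 : ℕ) : ℕ) ⟶ (m : ℕ)), f = g ≫ h)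
    (hEI : ∀ (n : ℕ) (f : (n : ℕ) ⟶ (n : ℕ)), IsIso f)
    (m : ℕ) (S : Sieve (m : ℕ)) (hS : S ≠ ⊥) :
    (∃ (n : ℕ) (f : (n : ℕ) ⟶ (m : ℕ)), S.arrows f ∧
        ∀ ⦃k : ℕ⦄ (h : (k : ℕ) ⟶ (m : ℕ)),
          S.arrows h ↔ ∃ g : (k : ℕ) ⟶ (n : ℕ), h = g ≫ f) ∧
    (∃ r : ℕ, S = degSieve hne m r) ∧
    (∀ r : ℕ, degSieve hne m (r + 1) < degSieve hne m r) := by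
  classical
  have hex : ∃ k : ℕ, ∃ f : (k : ℕ) ⟶ (m : ℕ), S.arrows f := by
    by_contra hc
    push_neg at hc
    apply hS
    apply Sieve.ext
    intro k f
    exact ⟨fun hf => absurd hf (hc k f), fun hf => hf.elim⟩
  set n := Nat.find hex with hn
  obtain ⟨f, hf⟩ := Nat.find_spec hex
  have hmin : ∀ (k : ℕ) (f' : (k : ℕ) ⟶ (m : ℕ)), S.arrows f' → n ≤ k :=
    fun k f' h => Nat.find_min' hex ⟨f', h⟩
  have hmn : m ≤ n := (hne m n).mp ⟨f⟩
  have hfact : ∀ (p : ℕ), m ≤ p → ∀ k, p ≤ k → ∀ h : (k : ℕ) ⟶ (m : ℕ),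
      ∃ (g : (k : ℕ) ⟶ (p : ℕ)) (f' : (p : ℕ) ⟶ (m : ℕ)), h = g ≫ f' := by
    intro p hp
    induction p, hp using Nat.le_induction with
    | base => exact fun k hk h => ⟨h, 𝟙 _, (Category.comp_id h).symm⟩
    | succ p hp ih =>
      intro k hk h
      obtain ⟨g, f', rfl⟩ := ih k (le_trans (Nat.le_succ p) hk) h
      obtain ⟨g₂, h₂, hg⟩ := hgen p k g (lt_of_lt_of_le (Nat.lt_succ_self p) hk)
      exact ⟨g₂, h₂ ≫ f', by rw [hg, Category.assoc]⟩
  have key : ∀ ⦃k : ℕ⦄ (h : (k : ℕ) ⟶ (m : ℕ)),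
      S.arrows h ↔ ∃ g : (k : ℕ) ⟶ (n : ℕ), h = g ≫ f := by
    intro k h
    constructor
    · intro hSh
      obtain ⟨g, f', rfl⟩ := hfact n hmn k (hmin k h hSh) h
      obtain ⟨e, he⟩ := htrans m n f f'
      exact ⟨g ≫ e, by rw [Category.assoc, he]⟩
    · rintro ⟨g, rfl⟩
      exact S.downward_closed hf g
  refine ⟨⟨n, f, hf, key⟩, ⟨n - m, ?_⟩, ?_⟩
  · apply Sieve.ext
    intro k h
    rw [key h]
    show (∃ g : (k : ℕ) ⟶ (n : ℕ), h = g ≫ f) ↔ m + (n - m) ≤ k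
    constructor
    · rintro ⟨g, rfl⟩
      have := (hne n k).mp ⟨g⟩
      omega
    · intro hk
      obtain ⟨g, f', rfl⟩ := hfact n hmn k (by omega) h
      obtain ⟨e, he⟩ := htrans m n f f'
      exact ⟨g ≫ e, by rw [Category.assoc, he]⟩
  · intro r
    rw [lt_iff_le_not_ge]
    constructor
    · intro k h hk
      show m + r ≤ k
      have : m + (r + 1) ≤ k := hk
      omega
    · intro hle
      obtain ⟨h⟩ := (hne m (m + r)).mpr (Nat.le_add_right m r)
      have h1 : (degSieve hne m r).arrows h := le_refl (m + r)
      have h2 : (degSieve hne m (r + 1)).arrows h := hle h h1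
      have : m + (r + 1) ≤ m + r := h2
      omega
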